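/- arXiv:2003.07222 — 2 statements merged into one kernel-verified Lean document; each statement's English description precedes it below -/
import Mathlib

section
/- Let X be an abstract state space, P a bounded projection on X, and T, S Markov operators on X such that SP = PS. Then δ_P(T ∘ S) ≤ δ_P(T) · δ_P(S). -/
/-- The generalized Dobrushin ergodicity coefficient of `T` with respect to `P`:
`δ_P(T) = sup {‖T x‖ : P x = 0, ‖x‖ ≤ 1}`. -/
noncomputable def dobrushinCoeff {X : Type*} [NormedAddCommGroup X] [NormedSpace ℝ X]
    (P T : X →L[ℝ] X) : ℝ :=
  sSup {r : ℝ | ∃ x : X, P x = 0 ∧ ‖x‖ ≤ 1 ∧ r = ‖T x‖}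

namespace dobrushinCoeff

variable {X : Type*} [NormedAddCommGroup X] [NormedSpace ℝ X] {P : X →L[ℝ] X}

theorem bddAbove (P T : X →L[ℝ] X) :
    BddAbove {r : ℝ | ∃ x : X, P x = 0 ∧ ‖x‖ ≤ 1 ∧ r = ‖T x‖} := by
  refine ⟨‖T‖, ?_⟩
  rintro r ⟨x, -, hx, rfl⟩
  exact T.le_of_opNorm_le_of_le le_rfl hx |>.trans_eq (mul_one _)

theorem norm_apply_le {T : X →L[ℝ] X} {x : X} (hPx : P x = 0) (hx : ‖x‖ ≤ 1) :
    ‖T x‖ ≤ dobrushinCoeff P T :=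
  le_csSup (bddAbove P T) ⟨x, hPx, hx, rfl⟩

theorem nonneg (P T : X →L[ℝ] X) : 0 ≤ dobrushinCoeff P T := by
  simpa using norm_apply_le (T := T) (map_zero P) (by simp)

theorem le_of_forall {T : X →L[ℝ] X} {c : ℝ}
    (h : ∀ x, P x = 0 → ‖x‖ ≤ 1 → ‖T x‖ ≤ c) : dobrushinCoeff P T ≤ c := by
  refine csSup_le ⟨0, 0, map_zero P, by simp, by simp⟩ ?_
  rintro r ⟨x, hPx, hx, rfl⟩
  exact h x hPx hx

theorem norm_apply_le_mul_norm {T : X →L[ℝ] X} {x : X} (hPx : P x = 0) :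
    ‖T x‖ ≤ dobrushinCoeff P T * ‖x‖ := by
  rcases eq_or_ne x 0 with rfl | hx0
  · simp
  have hpos : 0 < ‖x‖ := norm_pos_iff.mpr hx0
  have hunit : ‖‖x‖⁻¹ • x‖ ≤ 1 := by
    rw [norm_smul, norm_inv, norm_norm, inv_mul_cancel₀ hpos.ne']
  have hbound := norm_apply_le (T := T) (show P (‖x‖⁻¹ • x) = 0 by simp [hPx]) hunit
  calc ‖T x‖ = ‖T (‖x‖⁻¹ • x)‖ * ‖x‖ := by
        rw [map_smul, norm_smul, norm_inv, norm_norm, mul_right_comm, inv_mul_cancel₀ hpos.ne',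
          one_mul]
    _ ≤ dobrushinCoeff P T * ‖x‖ := by gcongr

theorem comp_le {T S : X →L[ℝ] X} (hS : ∀ x, P x = 0 → P (S x) = 0) :
    dobrushinCoeff P (T.comp S) ≤ dobrushinCoeff P T * dobrushinCoeff P S := by
  refine le_of_forall fun x hPx hx => ?_
  calc ‖T (S x)‖ ≤ dobrushinCoeff P T * ‖S x‖ := norm_apply_le_mul_norm (hS x hPx)
    _ ≤ dobrushinCoeff P T * dobrushinCoeff P S :=
      mul_le_mul_of_nonneg_left (norm_apply_le hPx hx) (nonneg P T)

end dobrushinCoeff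

theorem stmt17_general {X : Type*} [NormedAddCommGroup X] [NormedSpace ℝ X]
    (T S P : X →L[ℝ] X)
    (hSP : S.comp P = P.comp S) :
    dobrushinCoeff P (T.comp S) ≤ dobrushinCoeff P T * dobrushinCoeff P S := by
  refine dobrushinCoeff.comp_le fun x hPx => ?_
  rw [← ContinuousLinearMap.comp_apply P S, ← hSP, ContinuousLinearMap.comp_apply, hPx, map_zero]

theorem stmt17 {X : Type*} [NormedAddCommGroup X] [NormedSpace ℝ X] [CompleteSpace X]
    (C : Set X) (f : X →L[ℝ] ℝ)
    (hC_closed : IsClosed C)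
    (hC_add : ∀ x ∈ C, ∀ y ∈ C, x + y ∈ C)
    (hC_smul : ∀ r : ℝ, 0 ≤ r → ∀ x ∈ C, r • x ∈ C)
    (hC_pointed : ∀ x ∈ C, -x ∈ C → x = 0)
    (hf_pos : ∀ x ∈ C, x ≠ 0 → 0 < f x)
    (hnorm : ∀ x : X, ‖x‖ = sInf {r : ℝ | ∃ y ∈ C, ∃ z ∈ C, x = y - z ∧ r = f y + f z})
    (T S P : X →L[ℝ] X)
    (hT_pos : ∀ x ∈ C, T x ∈ C) (hT_f : ∀ x, f (T x) = f x)
    (hS_pos : ∀ x ∈ C, S x ∈ C) (hS_f : ∀ x, f (S x) = f x)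
    (hP_proj : P.comp P = P)
    (hSP : S.comp P = P.comp S) :
    dobrushinCoeff P (T.comp S) ≤ dobrushinCoeff P T * dobrushinCoeff P S :=
  stmt17_general T S P hSP
end

section
/- Let X be a strong abstract state space, P a Markov projection on X, and T a Markov operator on X. Then δ_P(T) = (1/2) · sup{‖Tu − Tv‖ : u, v ∈ K, P(u − v) = 0}. -/
open Filter Topology

/-!
An element `x` of `ker P` has `f x = f (P x) = 0`, so in a strong decomposition `x = y - z`
both parts have mass `‖x‖ / 2`; rescaling them into the base `K` writes `x = (‖x‖ / 2) • (u - v)`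
with `u, v ∈ K`, which gives `δ_P(T) ≤ ½ sup ‖T u - T v‖`. Conversely `‖u - v‖ ≤ f u + f v = 2`
for `u, v ∈ K`, so `‖T u - T v‖ ≤ 2 δ_P(T)` whenever `P (u - v) = 0`.
-/

section Dobrushin

variable {X : Type*} [NormedAddCommGroup X] [NormedSpace ℝ X] {P T : X →L[ℝ] X}

lemma dobrushinCoeff_nonneg : 0 ≤ dobrushinCoeff P T :=
  Real.sSup_nonneg <| by rintro _ ⟨x, -, -, rfl⟩; exact norm_nonneg _

lemma bddAbove_dobrushinCoeff_set :
    BddAbove {r : ℝ | ∃ x : X, P x = 0 ∧ ‖x‖ ≤ 1 ∧ r = ‖T x‖} := by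
  refine ⟨‖T‖, ?_⟩
  rintro _ ⟨x, -, hx, rfl⟩
  simpa using T.le_opNorm_of_le hx

lemma norm_apply_le_dobrushinCoeff {x : X} (hPx : P x = 0) (hx : ‖x‖ ≤ 1) :
    ‖T x‖ ≤ dobrushinCoeff P T :=
  le_csSup bddAbove_dobrushinCoeff_set ⟨x, hPx, hx, rfl⟩

lemma norm_apply_le_dobrushinCoeff_mul {x : X} (hPx : P x = 0) :
    ‖T x‖ ≤ dobrushinCoeff P T * ‖x‖ := by
  rcases eq_or_ne x 0 with rfl | hx0
  · simp
  have hnorm_pos : 0 < ‖x‖ := norm_pos_iff.mpr hx0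
  have hunit : ‖‖x‖⁻¹ • x‖ ≤ 1 := by
    rw [norm_smul, norm_inv, norm_norm, inv_mul_cancel₀ hnorm_pos.ne']
  have h := norm_apply_le_dobrushinCoeff (T := T) (by rw [map_smul, hPx, smul_zero]) hunit
  rw [map_smul, norm_smul, norm_inv, norm_norm, inv_mul_le_iff₀ hnorm_pos] at h
  linarith

end Dobrushin

section StateSpace

variable {X : Type*} [NormedAddCommGroup X] [NormedSpace ℝ X] {C : Set X} {f : X →L[ℝ] ℝ}

def baseDiffNormSet (C : Set X) (f : X →L[ℝ] ℝ) (P T : X →L[ℝ] X) : Set ℝ :=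
  {r : ℝ | ∃ u ∈ C, f u = 1 ∧ ∃ v ∈ C, f v = 1 ∧ P (u - v) = 0 ∧ r = ‖T u - T v‖}

lemma norm_sub_le_of_mem (hf_pos : ∀ x ∈ C, x ≠ 0 → 0 < f x)
    (hnorm : ∀ x : X, ‖x‖ = sInf {r : ℝ | ∃ y ∈ C, ∃ z ∈ C, x = y - z ∧ r = f y + f z})
    {y z : X} (hy : y ∈ C) (hz : z ∈ C) : ‖y - z‖ ≤ f y + f z := by
  have hf_nonneg : ∀ x ∈ C, 0 ≤ f x := fun x hx ↦ by
    rcases eq_or_ne x 0 with rfl | h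
    · simp
    · exact (hf_pos x hx h).le
  rw [hnorm (y - z)]
  refine csInf_le ⟨0, ?_⟩ ⟨y, hy, z, hz, rfl, rfl⟩
  rintro _ ⟨a, ha, b, hb, -, rfl⟩
  exact add_nonneg (hf_nonneg a ha) (hf_nonneg b hb)

lemma exists_eq_smul_sub_of_map_eq_zero (hC_smul : ∀ r : ℝ, 0 ≤ r → ∀ x ∈ C, r • x ∈ C)
    (hstrong : ∀ x : X, ∃ y ∈ C, ∃ z ∈ C, x = y - z ∧ ‖x‖ = f y + f z)
    {x : X} (hx0 : x ≠ 0) (hfx : f x = 0) :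
    ∃ u ∈ C, f u = 1 ∧ ∃ v ∈ C, f v = 1 ∧ x = (‖x‖ / 2) • (u - v) := by
  obtain ⟨y, hy, z, hz, rfl, hyz⟩ := hstrong x
  set t := ‖y - z‖ / 2 with ht_def
  have ht : 0 < t := by have := norm_pos_iff.mpr hx0; positivity
  have hfy : f y = t := by rw [map_sub] at hfx; linarith
  have hfz : f z = t := by rw [map_sub] at hfx; linarith
  refine ⟨t⁻¹ • y, hC_smul _ (inv_nonneg.mpr ht.le) y hy, ?_,
    t⁻¹ • z, hC_smul _ (inv_nonneg.mpr ht.le) z hz, ?_, ?_⟩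
  · rw [map_smul, hfy, smul_eq_mul, inv_mul_cancel₀ ht.ne']
  · rw [map_smul, hfz, smul_eq_mul, inv_mul_cancel₀ ht.ne']
  · rw [← smul_sub, smul_smul, mul_inv_cancel₀ ht.ne', one_smul]

variable {P T : X →L[ℝ] X}

lemma le_two_mul_dobrushinCoeff (hf_pos : ∀ x ∈ C, x ≠ 0 → 0 < f x)
    (hnorm : ∀ x : X, ‖x‖ = sInf {r : ℝ | ∃ y ∈ C, ∃ z ∈ C, x = y - z ∧ r = f y + f z}) :
    ∀ r ∈ baseDiffNormSet C f P T, r ≤ 2 * dobrushinCoeff P T := by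
  rintro _ ⟨u, hu, hfu, v, hv, hfv, hPuv, rfl⟩
  have huv : ‖u - v‖ ≤ 2 := by linarith [norm_sub_le_of_mem hf_pos hnorm hu hv]
  calc ‖T u - T v‖ = ‖T (u - v)‖ := by rw [map_sub]
    _ ≤ dobrushinCoeff P T * ‖u - v‖ := norm_apply_le_dobrushinCoeff_mul hPuv
    _ ≤ 2 * dobrushinCoeff P T := by nlinarith [dobrushinCoeff_nonneg (P := P) (T := T)]

lemma dobrushinCoeff_le_half_sSup (hC_smul : ∀ r : ℝ, 0 ≤ r → ∀ x ∈ C, r • x ∈ C)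
    (hstrong : ∀ x : X, ∃ y ∈ C, ∃ z ∈ C, x = y - z ∧ ‖x‖ = f y + f z)
    (hP_f : ∀ x, f (P x) = f x) (hbdd : BddAbove (baseDiffNormSet C f P T)) :
    dobrushinCoeff P T ≤ 1 / 2 * sSup (baseDiffNormSet C f P T) := by
  have hsSup_nonneg : 0 ≤ sSup (baseDiffNormSet C f P T) :=
    Real.sSup_nonneg <| by rintro _ ⟨u, -, -, v, -, -, -, rfl⟩; exact norm_nonneg _
  refine Real.sSup_le ?_ (by positivity)
  rintro _ ⟨x, hPx, hx, rfl⟩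
  rcases eq_or_ne x 0 with rfl | hx0
  · simpa using hsSup_nonneg
  have hfx : f x = 0 := by rw [← hP_f x, hPx, map_zero]
  obtain ⟨u, hu, hfu, v, hv, hfv, hxuv⟩ :=
    exists_eq_smul_sub_of_map_eq_zero hC_smul hstrong hx0 hfx
  have hPuv : P (u - v) = 0 := by
    have : ‖x‖ / 2 ≠ 0 := by have := norm_pos_iff.mpr hx0; positivity
    rwa [hxuv, map_smul, smul_eq_zero, or_iff_right this] at hPx
  have hmem : ‖T u - T v‖ ∈ baseDiffNormSet C f P T := ⟨u, hu, hfu, v, hv, hfv, hPuv, rfl⟩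
  calc ‖T x‖ = ‖T ((‖x‖ / 2) • (u - v))‖ := by rw [← hxuv]
    _ = ‖x‖ / 2 * ‖T u - T v‖ := by
        rw [map_smul, map_sub, norm_smul, Real.norm_of_nonneg (by positivity)]
    _ ≤ 1 / 2 * sSup (baseDiffNormSet C f P T) :=
        mul_le_mul (by linarith) (le_csSup hbdd hmem) (norm_nonneg _) (by norm_num)

end StateSpace

theorem stmt18_general {X : Type*} [NormedAddCommGroup X] [NormedSpace ℝ X]
    (C : Set X) (f : X →L[ℝ] ℝ)
    (hC_smul : ∀ r : ℝ, 0 ≤ r → ∀ x ∈ C, r • x ∈ C)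
    (hf_pos : ∀ x ∈ C, x ≠ 0 → 0 < f x)
    (hnorm : ∀ x : X, ‖x‖ = sInf {r : ℝ | ∃ y ∈ C, ∃ z ∈ C, x = y - z ∧ r = f y + f z})
    (hstrong : ∀ x : X, ∃ y ∈ C, ∃ z ∈ C, x = y - z ∧ ‖x‖ = f y + f z)
    (T P : X →L[ℝ] X)
    (hP_f : ∀ x, f (P x) = f x) :
    dobrushinCoeff P T =
      (1 / 2) * sSup {r : ℝ | ∃ u ∈ C, f u = 1 ∧
        ∃ v ∈ C, f v = 1 ∧ P (u - v) = 0 ∧ r = ‖T u - T v‖} := by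
  have hle := le_two_mul_dobrushinCoeff (P := P) (T := T) hf_pos hnorm
  have hsSup_le : sSup (baseDiffNormSet C f P T) ≤ 2 * dobrushinCoeff P T :=
    Real.sSup_le hle (by linarith [dobrushinCoeff_nonneg (P := P) (T := T)])
  have hge := dobrushinCoeff_le_half_sSup hC_smul hstrong hP_f ⟨_, hle⟩
  change _ = 1 / 2 * sSup (baseDiffNormSet C f P T)
  linarith

theorem stmt18 {X : Type*} [NormedAddCommGroup X] [NormedSpace ℝ X] [CompleteSpace X]
    (C : Set X) (f : X →L[ℝ] ℝ)
    (hC_closed : IsClosed C)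
    (hC_add : ∀ x ∈ C, ∀ y ∈ C, x + y ∈ C)
    (hC_smul : ∀ r : ℝ, 0 ≤ r → ∀ x ∈ C, r • x ∈ C)
    (hC_pointed : ∀ x ∈ C, -x ∈ C → x = 0)
    (hf_pos : ∀ x ∈ C, x ≠ 0 → 0 < f x)
    (hnorm : ∀ x : X, ‖x‖ = sInf {r : ℝ | ∃ y ∈ C, ∃ z ∈ C, x = y - z ∧ r = f y + f z})
    (hstrong : ∀ x : X, ∃ y ∈ C, ∃ z ∈ C, x = y - z ∧ ‖x‖ = f y + f z)
    (T P : X →L[ℝ] X)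
    (hT_pos : ∀ x ∈ C, T x ∈ C) (hT_f : ∀ x, f (T x) = f x)
    (hP_pos : ∀ x ∈ C, P x ∈ C) (hP_f : ∀ x, f (P x) = f x)
    (hP_proj : P.comp P = P) :
    dobrushinCoeff P T =
      (1 / 2) * sSup {r : ℝ | ∃ u ∈ C, f u = 1 ∧
        ∃ v ∈ C, f v = 1 ∧ P (u - v) = 0 ∧ r = ‖T u - T v‖} :=
  stmt18_general C f hC_smul hf_pos hnorm hstrong T P hP_f
end
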